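/- Suppose the chooser's values g^C_1,…,g^C_n are independent with g^C_i Gaussian of mean μ_i > 0 and variance σ_i² with σ_i > 0, the divider's values satisfy g^D_i > 0 for all i, and there exist goods j, k with g^D_j/μ_j > g^D_k/μ_k. Then there exists a division q ∈ [−1,1]^n with ∑_i q_i g^D_i > 0 and P(q) < 1/2, and consequently the divider's expected utility U(q) strictly exceeds his baseline utility (1/2)∑_i g^D_i. (One such division is q_j = (g^D_k + μ_k)/α, q_k = −(g^D_j + μ_j)/α, q_i = 0 otherwise, where α = max{g^D_j + μ_j, g^D_k + μ_k}.) -/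

import Mathlib

open BigOperators MeasureTheory ProbabilityTheory

/-! The reflection `x ↦ 2m − x` in the mean vector preserves the chooser's Gaussian law and
sends a linear form `L` with mean `c = L m` to `2c − L`. Hence `P(L > 0) = P(L < 2c)`, and when
`c < 0` these two disjoint events miss the open slab `2c < L < 0` around the mean, which has
positive Gaussian measure, so `P(L > 0) < 1/2`. A division `q` supported on the goods `j, k`
with `∑ qᵢ g^Dᵢ > 0 > ∑ qᵢ mᵢ` exists exactly because their critical ratios differ, and the
divider's gain over the baseline is `(1 − 2 P(q)) · ∑ qᵢ g^Dᵢ / 2`. -/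

lemma measureReal_pos_lt_half_of_reflection {Ω : Type*} [MeasurableSpace Ω] {μ : Measure Ω}
    [IsProbabilityMeasure μ] {φ : Ω → Ω} (hφ : MeasurePreserving φ μ μ) {L : Ω → ℝ}
    (hL : Measurable L) {c : ℝ} (hLφ : ∀ x, L (φ x) = 2 * c - L x)
    (hslab : μ {x | 2 * c < L x ∧ L x < 0} ≠ 0) :
    μ.real {x | 0 < L x} < 1 / 2 := by
  set A := {x | 0 < L x}
  set B := {x | L x < 2 * c}
  set C := {x | 2 * c < L x ∧ L x < 0}
  have hA : MeasurableSet A := measurableSet_lt measurable_const hL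
  have hB : MeasurableSet B := measurableSet_lt hL measurable_const
  have hC : MeasurableSet C :=
    (measurableSet_lt measurable_const hL).inter (measurableSet_lt hL measurable_const)
  have hBA : μ.real B = μ.real A := by
    have hpre : φ ⁻¹' A = B := by ext x; simp [A, B, hLφ]
    rw [← hpre, measureReal_def, measureReal_def, hφ.measure_preimage hA.nullMeasurableSet]
  obtain ⟨x₀, hx₀ : 2 * c < L x₀ ∧ L x₀ < 0⟩ := nonempty_of_measure_ne_zero hslab
  have hAB : Disjoint A B := Set.disjoint_left.mpr fun x (hxA : 0 < L x) (hxB : L x < 2 * c) => by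
    linarith
  have hABC : Disjoint (A ∪ B) C :=
    Set.disjoint_left.mpr fun x hx (hxC : 2 * c < L x ∧ L x < 0) => by
      rcases hx with (hx : 0 < L x) | (hx : L x < 2 * c) <;> linarith
  have htotal : μ.real A + μ.real B + μ.real C ≤ 1 := by
    rw [← measureReal_union hAB hB, ← measureReal_union hABC hC]
    exact measureReal_le_one
  have hCpos : 0 < μ.real C := ENNReal.toReal_pos hslab (measure_ne_top μ C)
  linarith

lemma gaussianReal_map_two_mul_sub (m : ℝ) (v : NNReal) :
    (gaussianReal m v).map (2 * m - ·) = gaussianReal m v := by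
  rw [gaussianReal_map_const_sub, two_mul, add_sub_cancel_right]

lemma pi_gaussianReal_real_sum_mul_pos_lt_half {ι : Type*} [Fintype ι] {m : ι → ℝ}
    {v : ι → NNReal} (hv : ∀ i, v i ≠ 0) {q : ι → ℝ} (hqm : ∑ i, q i * m i < 0) :
    (Measure.pi fun i => gaussianReal (m i) (v i)).real {x | 0 < ∑ i, q i * x i} < 1 / 2 := by
  set μ := Measure.pi fun i => gaussianReal (m i) (v i)
  set L : (ι → ℝ) → ℝ := fun x => ∑ i, q i * x i
  have hreflect : MeasurePreserving (fun (x : ι → ℝ) i => 2 * m i - x i) μ μ :=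
    measurePreserving_pi _ _ fun i => ⟨by fun_prop, gaussianReal_map_two_mul_sub (m i) (v i)⟩
  have hLreflect (x : ι → ℝ) : L (fun i => 2 * m i - x i) = 2 * L m - L x := by
    simp only [L, mul_sub, Finset.sum_sub_distrib, Finset.mul_sum]
    congr 1; exact Finset.sum_congr rfl fun i _ => by ring
  have : ∀ i, (gaussianReal (m i) (v i)).IsOpenPosMeasure := fun i =>
    (gaussianReal_absolutelyContinuous' (m i) (hv i)).isOpenPosMeasure
  have hslab : μ {x | 2 * L m < L x ∧ L x < 0} ≠ 0 := by
    have hL : Continuous L := by fun_prop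
    exact ((isOpen_lt continuous_const hL).inter (isOpen_lt hL continuous_const)).measure_ne_zero μ
      ⟨m, show 2 * L m < L m by linarith, hqm⟩
  exact measureReal_pos_lt_half_of_reflection hreflect (by fun_prop) hLreflect hslab

lemma exists_mem_Icc_sum_mul_pos_sum_mul_neg {ι : Type*} [Fintype ι] [DecidableEq ι]
    {g m : ι → ℝ} (hg : ∀ i, 0 < g i) (hm : ∀ i, 0 < m i) {j k : ι}
    (hjk : g k / m k < g j / m j) :
    ∃ q : ι → ℝ, (∀ i, q i ∈ Set.Icc (-1 : ℝ) 1) ∧ 0 < ∑ i, q i * g i ∧ ∑ i, q i * m i < 0 := by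
  have hne : j ≠ k := by rintro rfl; exact lt_irrefl _ hjk
  have hcross : g k * m j < g j * m k := (div_lt_div_iff₀ (hm k) (hm j)).mp hjk
  set α := max (g j + m j) (g k + m k)
  have hj : 0 < g j + m j := add_pos (hg j) (hm j)
  have hk : 0 < g k + m k := add_pos (hg k) (hm k)
  have hα : 0 < α := hj.trans_le (le_max_left _ _)
  set q : ι → ℝ := Pi.single j ((g k + m k) / α) + Pi.single k (-((g j + m j) / α))
  have hq (x : ι → ℝ) : ∑ i, q i * x i = ((g k + m k) * x j - (g j + m j) * x k) / α := by
    simp only [q, Pi.add_apply, Pi.single_apply, add_mul, ite_mul, zero_mul, neg_mul,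
      Finset.sum_add_distrib, Finset.sum_ite_eq', Finset.mem_univ, if_true]
    ring
  refine ⟨q, fun i => ?_, ?_, ?_⟩
  · have hqj : (g k + m k) / α ≤ 1 := (div_le_one hα).mpr (le_max_right _ _)
    have hqk : (g j + m j) / α ≤ 1 := (div_le_one hα).mpr (le_max_left _ _)
    have := div_pos hk hα
    have := div_pos hj hα
    by_cases hij : i = j
    · subst hij
      simp only [q, Pi.add_apply, Pi.single_eq_same, Pi.single_eq_of_ne hne, add_zero, Set.mem_Icc]
      constructor <;> linarith
    by_cases hik : i = k
    · subst hik
      simp only [q, Pi.add_apply, Pi.single_eq_same, Pi.single_eq_of_ne hij, zero_add, Set.mem_Icc]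
      constructor <;> linarith
    simp [q, hij, hik]
  · rw [hq]; apply div_pos _ hα; linarith
  · rw [hq]; apply div_neg_of_neg_of_pos _ hα; linarith

lemma divider_utility_eq {ι : Type*} [Fintype ι] (p : ℝ) (q g : ι → ℝ) :
    p * ∑ i, (1 - (1 + q i) / 2) * g i + (1 - p) * ∑ i, ((1 + q i) / 2) * g i
      = 1 / 2 * ∑ i, g i + (1 - 2 * p) * (∑ i, q i * g i) / 2 := by
  simp only [Finset.mul_sum, Finset.sum_div, ← Finset.sum_add_distrib]
  exact Finset.sum_congr rfl fun i _ => by ring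

/-- With chooser values independent Gaussians `g^C_i ~ N(m_i, σ_i²)`,
`m_i > 0`, `σ_i > 0`, divider values `g^D_i > 0`, and two goods `j, k` with strictly
different critical ratios `g^D_j/m_j > g^D_k/m_k`, there is a division `q ∈ [−1,1]^n` with
`∑ q_i g^D_i > 0` and `P(q) < 1/2`, hence `U(q)` strictly exceeds the divider's baseline
`(1/2)∑ g^D_i`. -/
theorem unequal_critical_ratios_beats_baseline (n : ℕ) (gD m σ : Fin n → ℝ)
    (hm : ∀ i, 0 < m i) (hσ : ∀ i, 0 < σ i) (hgD : ∀ i, 0 < gD i)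
    (j k : Fin n) (hjk : gD k / m k < gD j / m j)
    (μ : Measure (Fin n → ℝ))
    (hμ : μ = Measure.pi fun i => gaussianReal (m i) (Real.toNNReal (σ i ^ 2)))
    (P : (Fin n → ℝ) → ℝ)
    (hP : ∀ q : Fin n → ℝ, P q = (μ {x | 0 < ∑ i, q i * x i}).toReal)
    (U : (Fin n → ℝ) → ℝ)
    (hU : ∀ q : Fin n → ℝ, U q = P q * ∑ i, (1 - (1 + q i) / 2) * gD i
            + (1 - P q) * ∑ i, ((1 + q i) / 2) * gD i) :
    ∃ q : Fin n → ℝ,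
      (∀ i, q i ∈ Set.Icc (-1 : ℝ) 1) ∧
      0 < ∑ i, q i * gD i ∧
      P q < 1 / 2 ∧
      (1 / 2) * ∑ i, gD i < U q := by
  obtain ⟨q, hq, hgain, hmean⟩ := exists_mem_Icc_sum_mul_pos_sum_mul_neg hgD hm hjk
  have hvar (i : Fin n) : Real.toNNReal (σ i ^ 2) ≠ 0 :=
    (Real.toNNReal_pos.mpr (pow_pos (hσ i) 2)).ne'
  have hPq : P q < 1 / 2 := by
    rw [hP, hμ]
    exact pi_gaussianReal_real_sum_mul_pos_lt_half hvar hmean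
  refine ⟨q, hq, hgain, hPq, ?_⟩
  rw [hU, divider_utility_eq]
  have := mul_pos (by linarith : 0 < 1 - 2 * P q) hgain
  linarith
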